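/- arXiv:2405.13533 — 4 statements merged into one kernel-verified Lean document; each statement's English description precedes it below -/
import Mathlib

section
/- Every element of the restricted symplectic group Sp_res(V,Ω) lies in the connected component of the identity of GL_res; in particular the block g of any a = (g, h; h̄, ḡ) ∈ Sp_res(V,Ω) has Fredholm index zero. -/
/- Setting: `H = H₊ ⊕ H₋` is a separable complex Hilbert space. We model the two summands
as complex Hilbert spaces `Hp`, `Hm` and operators on `H` by their four blocks, or work on a
single Hilbert space `H` with orthogonal projections `p₊, p₋`. The antilinear conjugation
exchanging `H₊` and `H₋` is modeled as a conjugate-linear isometric equivalence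
`c : Hp ≃ₛₗᵢ[starRingEnd ℂ] Hm`. -/

noncomputable section
open ContinuousLinearMap Complex
open scoped InnerProductSpace ComplexOrder

instance : RingHomCompTriple (starRingEnd ℂ) (starRingEnd ℂ) (RingHom.id ℂ) :=
  ⟨RingHom.ext fun z => Complex.conj_conj z⟩

/-- A bounded operator between complex Hilbert spaces is Hilbert–Schmidt if for every
Hilbert basis, the sum of the squared norms of the images of the basis vectors is finite. -/
def IsHS {E F : Type} [NormedAddCommGroup E] [InnerProductSpace ℂ E]
    [NormedAddCommGroup F] [InnerProductSpace ℂ F] (T : E →L[ℂ] F) : Prop :=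
  ∀ b : HilbertBasis ℕ ℂ E, Summable fun i => ‖T (b i)‖ ^ 2

/-- The conjugate `T̄` (defined by `T̄ u = conj (T ū)`) of an operator, with respect to
antilinear conjugations `cA`, `cB` on the domain and codomain. -/
def opBar {A A' B B' : Type} [NormedAddCommGroup A] [InnerProductSpace ℂ A]
    [NormedAddCommGroup A'] [InnerProductSpace ℂ A']
    [NormedAddCommGroup B] [InnerProductSpace ℂ B]
    [NormedAddCommGroup B'] [InnerProductSpace ℂ B']
    (cA : A ≃ₛₗᵢ[starRingEnd ℂ] A') (cB : B ≃ₛₗᵢ[starRingEnd ℂ] B')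
    (T : A →L[ℂ] B) : A' →L[ℂ] B' :=
  cB.toLinearIsometry.toContinuousLinearMap.comp
    (T.comp cA.symm.toLinearIsometry.toContinuousLinearMap)

/-- Fredholm operator: finite-dimensional kernel and cokernel. -/
def IsFredholm {E F : Type} [NormedAddCommGroup E] [NormedSpace ℂ E]
    [NormedAddCommGroup F] [NormedSpace ℂ F] (T : E →L[ℂ] F) : Prop :=
  FiniteDimensional ℂ (LinearMap.ker (T : E →ₗ[ℂ] F)) ∧ FiniteDimensional ℂ (F ⧸ LinearMap.range (T : E →ₗ[ℂ] F))

/-- Fredholm index `Ind T = dim ker T − codim range T`. -/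
def fredholmIndex {E F : Type} [NormedAddCommGroup E] [NormedSpace ℂ E]
    [NormedAddCommGroup F] [NormedSpace ℂ F] (T : E →L[ℂ] F) : ℤ :=
  (Module.finrank ℂ (LinearMap.ker (T : E →ₗ[ℂ] F)) : ℤ) - Module.finrank ℂ (F ⧸ LinearMap.range (T : E →ₗ[ℂ] F))

variable {Hp Hm : Type} [NormedAddCommGroup Hp] [InnerProductSpace ℂ Hp] [CompleteSpace Hp]
  [NormedAddCommGroup Hm] [InnerProductSpace ℂ Hm] [CompleteSpace Hm]

/-- `Zᵀ := (Z̄)*` for `Z : H₋ → H₊`. -/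
def opTrans (c : Hp ≃ₛₗᵢ[starRingEnd ℂ] Hm) (Z : Hm →L[ℂ] Hp) : Hm →L[ℂ] Hp :=
  adjoint (opBar c.symm c Z)

/-- `ḡ : H₋ → H₋` for `g : H₊ → H₊`. -/
def barP (c : Hp ≃ₛₗᵢ[starRingEnd ℂ] Hm) (g : Hp →L[ℂ] Hp) : Hm →L[ℂ] Hm :=
  opBar c c g

/-- `h̄ : H₊ → H₋` for `h : H₋ → H₊`. -/
def barM (c : Hp ≃ₛₗᵢ[starRingEnd ℂ] Hm) (h : Hm →L[ℂ] Hp) : Hp →L[ℂ] Hm :=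
  opBar c.symm c h

/-- `gᵀ := (ḡ)* : H₋ → H₋` for `g : H₊ → H₊`. -/
def transP (c : Hp ≃ₛₗᵢ[starRingEnd ℂ] Hm) (g : Hp →L[ℂ] Hp) : Hm →L[ℂ] Hm :=
  adjoint (barP c g)

/-- The conditions on the blocks `(g, h; h̄, ḡ)` characterizing elements of `Sp(V,Ω)`:
`g*g − hᵀh̄ = id`, `g*h = hᵀḡ`, `gg* − hh* = id`, `ghᵀ = hgᵀ`. -/
def SympBlocks (c : Hp ≃ₛₗᵢ[starRingEnd ℂ] Hm) (g : Hp →L[ℂ] Hp) (h : Hm →L[ℂ] Hp) : Prop :=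
  (adjoint g) ∘L g - (opTrans c h) ∘L (barM c h) = 1 ∧
  (adjoint g) ∘L h = (opTrans c h) ∘L (barP c g) ∧
  g ∘L (adjoint g) - h ∘L (adjoint h) = 1 ∧
  g ∘L (opTrans c h) = h ∘L (transP c g)

/-- Membership in the restricted Siegel disc:
`Z` Hilbert–Schmidt, `Zᵀ = Z`, and `id − Z*Z ≻ 0`. -/
def InDres (c : Hp ≃ₛₗᵢ[starRingEnd ℂ] Hm) (Z : Hm →L[ℂ] Hp) : Prop :=
  IsHS Z ∧ opTrans c Z = Z ∧
    ∀ u : Hm, u ≠ 0 → 0 < ⟪u, (1 - (adjoint Z) ∘L Z) u⟫_ℂ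

/-- The action `ρ((g,h;h̄,ḡ), Z) = (gZ + h)(h̄Z + ḡ)⁻¹`. -/
def rho (c : Hp ≃ₛₗᵢ[starRingEnd ℂ] Hm) (g : Hp →L[ℂ] Hp) (h : Hm →L[ℂ] Hp)
    (Z : Hm →L[ℂ] Hp) : Hm →L[ℂ] Hp :=
  (g ∘L Z + h) ∘L Ring.inverse ((barM c h) ∘L Z + (barP c g))


lemma aux_norm_le {E F G : Type} [NormedAddCommGroup E] [InnerProductSpace ℂ E]
    [NormedAddCommGroup F] [InnerProductSpace ℂ F]
    [NormedAddCommGroup G] [InnerProductSpace ℂ G]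
    [CompleteSpace E] [CompleteSpace F] [CompleteSpace G]
    (A : E →L[ℂ] F) (B : E →L[ℂ] G)
    (hAB : (adjoint A) ∘L A = 1 + (adjoint B) ∘L B) (x : E) : ‖x‖ ≤ ‖A x‖ := by
  have h1 : ⟪x, ((adjoint A) ∘L A) x⟫_ℂ = ⟪A x, A x⟫_ℂ := by
    simp only [ContinuousLinearMap.comp_apply]
    exact ContinuousLinearMap.adjoint_inner_right _ _ _
  have h2 : ⟪x, ((adjoint B) ∘L B) x⟫_ℂ = ⟪B x, B x⟫_ℂ := by
    simp only [ContinuousLinearMap.comp_apply]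
    exact ContinuousLinearMap.adjoint_inner_right _ _ _
  have h3 : ⟪A x, A x⟫_ℂ = ⟪x, x⟫_ℂ + ⟪B x, B x⟫_ℂ := by
    rw [← h1, hAB]; simp [ContinuousLinearMap.add_apply, inner_add_right,
      ContinuousLinearMap.adjoint_inner_right]
  have h4 : (‖A x‖ : ℝ) ^ 2 = ‖x‖ ^ 2 + ‖B x‖ ^ 2 := by
    rw [inner_self_eq_norm_sq_to_K, inner_self_eq_norm_sq_to_K,
      inner_self_eq_norm_sq_to_K] at h3
    exact_mod_cast h3
  nlinarith [sq_nonneg ‖B x‖, norm_nonneg x, norm_nonneg (A x), sq_nonneg (‖x‖ - ‖A x‖),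
    sq_nonneg (‖x‖ + ‖A x‖)]

/-- every element of `Sp_res(V,Ω)` lies in the identity component of `GL_res`;
in particular the block `g` of any `(g, h; h̄, ḡ) ∈ Sp_res(V,Ω)` has Fredholm index zero. -/
theorem statement6 (c : Hp ≃ₛₗᵢ[starRingEnd ℂ] Hm) (g : Hp →L[ℂ] Hp) (h : Hm →L[ℂ] Hp)
    (hs : SympBlocks c g h) (hHS : IsHS h) :
    _root_.IsFredholm g ∧ fredholmIndex g = 0 := by
  -- g*g = 1 + T*T with T = barM c h
  have hgg : (adjoint g) ∘L g = 1 + (adjoint (barM c h)) ∘L (barM c h) := by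
    have := hs.1
    have hoT : opTrans c h = adjoint (barM c h) := rfl
    rw [hoT] at this
    linear_combination (norm := abel1) this
  have hgg' : (adjoint (adjoint g)) ∘L (adjoint g)
      = 1 + (adjoint (adjoint h)) ∘L (adjoint h) := by
    rw [ContinuousLinearMap.adjoint_adjoint, ContinuousLinearMap.adjoint_adjoint]
    have := hs.2.2.1
    linear_combination (norm := abel1) this
  have hlow : ∀ x, ‖x‖ ≤ ‖g x‖ := aux_norm_le g (barM c h) hgg
  have hlow' : ∀ y, ‖y‖ ≤ ‖(adjoint g) y‖ := aux_norm_le (adjoint g) (adjoint h) hgg'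
  -- g injective
  have hker : LinearMap.ker (g : Hp →ₗ[ℂ] Hp) = ⊥ := by
    rw [LinearMap.ker_eq_bot']
    intro x hx
    have := hlow x
    rw [ContinuousLinearMap.coe_coe] at hx
    rw [hx, norm_zero] at this
    exact norm_le_zero_iff.mp this
  -- range of g is closed
  have hanti : AntilipschitzWith 1 g :=
    g.antilipschitz_of_bound (fun x => by simpa using hlow x)
  have hclosed : IsClosed (Set.range g) := hanti.isClosed_range g.uniformContinuous
  have hclosed' : IsClosed ((LinearMap.range (g : Hp →ₗ[ℂ] Hp) : Submodule ℂ Hp) : Set Hp) := by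
    simpa [LinearMap.coe_range] using hclosed
  haveI : CompleteSpace (LinearMap.range (g : Hp →ₗ[ℂ] Hp)) := hclosed'.completeSpace_coe
  -- range of g is all of Hp
  have hrange : LinearMap.range (g : Hp →ₗ[ℂ] Hp) = ⊤ := by
    rw [← Submodule.orthogonal_eq_bot_iff]
    rw [Submodule.eq_bot_iff]
    intro y hy
    have hgy : (adjoint g) y = 0 := by
      have : ⟪(adjoint g) y, (adjoint g) y⟫_ℂ = 0 := by
        rw [ContinuousLinearMap.adjoint_inner_right]
        exact hy _ (LinearMap.mem_range_self (g : Hp →ₗ[ℂ] Hp) _)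
      exact inner_self_eq_zero.mp this
    have := hlow' y
    rw [hgy, norm_zero] at this
    exact norm_le_zero_iff.mp this
  haveI : Subsingleton (Hp ⧸ LinearMap.range (g : Hp →ₗ[ℂ] Hp)) :=
    Submodule.Quotient.subsingleton_iff.mpr hrange
  constructor
  · exact ⟨by rw [hker]; infer_instance, inferInstance⟩
  · rw [fredholmIndex, hker]
    simp [Module.finrank_zero_of_subsingleton, finrank_bot]
end
end

section
/- Let (g, h; h̄, ḡ) ∈ Sp_res(V,Ω) and Z in the restricted Siegel disc D_res(H). Then h̄Z + ḡ is an invertible operator on H₋. -/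
/- Setting: `H = H₊ ⊕ H₋` is a separable complex Hilbert space. We model the two summands
as complex Hilbert spaces `Hp`, `Hm` and operators on `H` by their four blocks, or work on a
single Hilbert space `H` with orthogonal projections `p₊, p₋`. The antilinear conjugation
exchanging `H₊` and `H₋` is modeled as a conjugate-linear isometric equivalence
`c : Hp ≃ₛₗᵢ[starRingEnd ℂ] Hm`. -/

noncomputable section
open ContinuousLinearMap Complex
open scoped InnerProductSpace ComplexOrder

variable {Hp Hm : Type} [NormedAddCommGroup Hp] [InnerProductSpace ℂ Hp] [CompleteSpace Hp]
  [NormedAddCommGroup Hm] [InnerProductSpace ℂ Hm] [CompleteSpace Hm]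

/-! The relations `g*g − hᵀh̄ = 1` and `gg* − hh* = 1`, conjugated by `c`, say that
`ḡ*ḡ = 1 + h*h` and `ḡḡ* = 1 + h̄h̄*`. Hence `ḡ` is invertible and
`‖ḡ* x‖² = ‖x‖² + ‖h̄* x‖²`; together with `‖ḡ* x‖ ≤ M ‖x‖` this gives `‖h̄* x‖ ≤ q ‖ḡ* x‖`
for some `q < 1`. Since `‖Z‖ ≤ 1`, the adjoint `ḡ* + Z*h̄*` of `h̄Z + ḡ` is a perturbation
of the invertible `ḡ*` by an operator of relative bound `q < 1`, so it is invertible by a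
Neumann series. -/

open scoped InnerProduct

theorem isUnit_of_isUnit_mul_of_isUnit_mul {M : Type*} [Monoid M] {a b c : M}
    (hab : IsUnit (a * b)) (hca : IsUnit (c * a)) : IsUnit a :=
  isUnit_iff_exists_and_exists.2
    ⟨⟨b * ↑hab.unit⁻¹, by rw [← mul_assoc, IsUnit.mul_val_inv]⟩,
      ⟨↑hca.unit⁻¹ * c, by rw [mul_assoc, IsUnit.val_inv_mul]⟩⟩

namespace ContinuousLinearMap

section Normed

variable {𝕜 E F G : Type*} [NontriviallyNormedField 𝕜]
  [NormedAddCommGroup E] [NormedSpace 𝕜 E] [NormedAddCommGroup F] [NormedSpace 𝕜 F]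
  [NormedAddCommGroup G] [NormedSpace 𝕜 G]

theorem exists_lt_one_forall_norm_apply_le (A : E →L[𝕜] F) (P : E →L[𝕜] G)
    (h : ∀ x, ‖P x‖ ^ 2 + ‖x‖ ^ 2 ≤ ‖A x‖ ^ 2) :
    ∃ q : ℝ, 0 ≤ q ∧ q < 1 ∧ ∀ x, ‖P x‖ ≤ q * ‖A x‖ := by
  -- `‖A x‖ ≤ M ‖x‖` turns the hypothesis into `‖P x‖² ≤ (1 - M⁻²) ‖A x‖²`.
  set M : ℝ := ‖A‖ + 1
  have hM : 1 ≤ M := le_add_of_nonneg_left (norm_nonneg A)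
  have hM2 : 0 < (M ^ 2)⁻¹ := by positivity
  have hM2' : (M ^ 2)⁻¹ ≤ 1 := inv_le_one_of_one_le₀ (one_le_pow₀ hM)
  refine ⟨√(1 - (M ^ 2)⁻¹), Real.sqrt_nonneg _, ?_, fun x => ?_⟩
  · rw [Real.sqrt_lt' one_pos]
    linarith
  · have hAx : ‖A x‖ ≤ M * ‖x‖ :=
      (A.le_opNorm x).trans (mul_le_mul_of_nonneg_right (le_add_of_nonneg_right zero_le_one)
        (norm_nonneg x))
    have hx : (M ^ 2)⁻¹ * ‖A x‖ ^ 2 ≤ ‖x‖ ^ 2 := by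
      rw [inv_mul_le_iff₀ (by positivity), ← mul_pow]
      exact pow_le_pow_left₀ (norm_nonneg _) hAx 2
    rw [← Real.sqrt_sq (norm_nonneg (A x)), ← Real.sqrt_mul (by linarith)]
    refine Real.le_sqrt_of_sq_le ?_
    nlinarith [h x]

theorem isUnit_add_of_norm_apply_le [CompleteSpace E] {A P : E →L[𝕜] E}
    (hA : IsUnit A) {q : ℝ} (hq₀ : 0 ≤ q) (hq : q < 1) (hPA : ∀ x, ‖P x‖ ≤ q * ‖A x‖) :
    IsUnit (A + P) := by
  obtain ⟨B, hAB, hBA⟩ := isUnit_iff_exists.mp hA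
  have hK : ‖-(P * B)‖ < 1 := by
    rw [norm_neg]
    refine (opNorm_le_bound _ hq₀ fun y => ?_).trans_lt hq
    have hy : A (B y) = y := DFunLike.congr_fun hAB y
    exact (hPA (B y)).trans_eq (by rw [hy])
  have hfac : A + P = (1 - -(P * B)) * A := by
    rw [sub_neg_eq_add, add_mul, mul_assoc, hBA, one_mul, mul_one]
  rw [hfac]
  exact (isUnit_one_sub_of_norm_lt_one hK).mul hA

end Normed

section Hilbert

variable {𝕜 E F : Type*} [RCLike 𝕜]
  [NormedAddCommGroup E] [InnerProductSpace 𝕜 E] [CompleteSpace E]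
  [NormedAddCommGroup F] [InnerProductSpace 𝕜 F] [CompleteSpace F]

theorem norm_sq_add_norm_sq_eq_of_adjoint_comp_self_eq {T : E →L[𝕜] E} {A : E →L[𝕜] F}
    (hT : T† ∘L T = 1 + A† ∘L A) (x : E) : ‖A x‖ ^ 2 + ‖x‖ ^ 2 = ‖T x‖ ^ 2 := by
  rw [apply_norm_sq_eq_inner_adjoint_left, apply_norm_sq_eq_inner_adjoint_left T, hT, add_apply,
    one_apply_eq_self, inner_add_left, map_add, ← inner_self_eq_norm_sq (𝕜 := 𝕜), add_comm]

theorem isUnit_one_add_adjoint_comp_self (A : E →L[𝕜] F) : IsUnit (1 + A† ∘L A) := by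
  refine isUnit_of_forall_le_norm_inner_map _ one_pos fun x => ?_
  have hx : ⟪(1 + A† ∘L A) x, x⟫_𝕜 = ((‖x‖ ^ 2 + ‖A x‖ ^ 2 : ℝ) : 𝕜) := by
    rw [add_apply, one_apply_eq_self, inner_add_left, comp_apply, adjoint_inner_left,
      inner_self_eq_norm_sq_to_K, inner_self_eq_norm_sq_to_K]
    push_cast; rfl
  rw [hx, RCLike.norm_ofReal, NNReal.coe_one, mul_one]
  exact (le_add_of_nonneg_right (sq_nonneg _)).trans (le_abs_self _)

theorem isUnit_of_adjoint_comp_self_eq_one_add {T : E →L[𝕜] E} {A : E →L[𝕜] F} {B : F →L[𝕜] E}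
    (h₁ : T† ∘L T = 1 + A† ∘L A) (h₂ : T ∘L T† = 1 + B ∘L B†) : IsUnit T := by
  have hTT : IsUnit (T * T†) := by
    simpa only [mul_def, h₂, adjoint_adjoint] using isUnit_one_add_adjoint_comp_self (B†)
  have hTT' : IsUnit (T† * T) := by
    simpa only [mul_def, h₁] using isUnit_one_add_adjoint_comp_self A
  exact isUnit_of_isUnit_mul_of_isUnit_mul hTT hTT'

end Hilbert

theorem norm_le_one_of_inner_one_sub_adjoint_comp_self_pos {E F : Type*}
    [NormedAddCommGroup E] [InnerProductSpace ℂ E] [CompleteSpace E]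
    [NormedAddCommGroup F] [InnerProductSpace ℂ F] [CompleteSpace F] {Z : E →L[ℂ] F}
    (hZ : ∀ u, u ≠ 0 → 0 < ⟪u, (1 - Z† ∘L Z) u⟫_ℂ) : ‖Z‖ ≤ 1 := by
  refine opNorm_le_bound _ zero_le_one fun u => ?_
  rcases eq_or_ne u 0 with rfl | hu
  · simp
  have hre : ‖Z u‖ ^ 2 < ‖u‖ ^ 2 := by
    have := (Complex.lt_def.mp (hZ u hu)).1
    rw [sub_apply, one_apply_eq_self, inner_sub_right, Complex.sub_re, Complex.zero_re] at this
    rw [apply_norm_sq_eq_inner_adjoint_right, ← inner_self_eq_norm_sq (𝕜 := ℂ)]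
    exact sub_pos.mp this
  rw [one_mul]
  exact (pow_lt_pow_iff_left₀ (norm_nonneg _) (norm_nonneg _) two_ne_zero).mp hre |>.le

end ContinuousLinearMap

theorem LinearIsometryEquiv.inner_map_map_conj {E F : Type*} [NormedAddCommGroup E]
    [InnerProductSpace ℂ E] [NormedAddCommGroup F] [InnerProductSpace ℂ F]
    (c : E ≃ₛₗᵢ[starRingEnd ℂ] F) (x y : E) : ⟪c x, c y⟫_ℂ = ⟪y, x⟫_ℂ := by
  have hre : ∀ x y, RCLike.re ⟪c x, c y⟫_ℂ = RCLike.re ⟪x, y⟫_ℂ := fun x y => by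
    rw [re_inner_eq_norm_add_mul_self_sub_norm_mul_self_sub_norm_mul_self_div_two,
      re_inner_eq_norm_add_mul_self_sub_norm_mul_self_sub_norm_mul_self_div_two, ← map_add,
      c.norm_map, c.norm_map, c.norm_map]
  have him := hre x (Complex.I • y)
  rw [c.map_smulₛₗ, inner_smul_right, inner_smul_right] at him
  rw [← inner_conj_symm y x]
  apply Complex.ext
  · rw [Complex.conj_re]; exact hre x y
  · rw [Complex.conj_im]; simpa using him

section Conjugation

variable {A A' B B' : Type} [NormedAddCommGroup A] [InnerProductSpace ℂ A]
  [NormedAddCommGroup A'] [InnerProductSpace ℂ A']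
  [NormedAddCommGroup B] [InnerProductSpace ℂ B]
  [NormedAddCommGroup B'] [InnerProductSpace ℂ B']

@[simp]
theorem opBar_apply (cA : A ≃ₛₗᵢ[starRingEnd ℂ] A') (cB : B ≃ₛₗᵢ[starRingEnd ℂ] B')
    (T : A →L[ℂ] B) (x : A') : opBar cA cB T x = cB (T (cA.symm x)) := rfl

variable [CompleteSpace A] [CompleteSpace A'] [CompleteSpace B] [CompleteSpace B']

theorem adjoint_opBar (cA : A ≃ₛₗᵢ[starRingEnd ℂ] A') (cB : B ≃ₛₗᵢ[starRingEnd ℂ] B')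
    (T : A →L[ℂ] B) : (opBar cA cB T)† = opBar cB cA (T†) := by
  refine ((ContinuousLinearMap.eq_adjoint_iff _ _).mpr fun x y => ?_).symm
  calc ⟪cA ((T†) (cB.symm x)), y⟫_ℂ = ⟪cA ((T†) (cB.symm x)), cA (cA.symm y)⟫_ℂ := by
        rw [cA.apply_symm_apply]
    _ = ⟪T (cA.symm y), cB.symm x⟫_ℂ := by
        rw [cA.inner_map_map_conj, ContinuousLinearMap.adjoint_inner_right]
    _ = ⟪cB.symm (cB (T (cA.symm y))), cB.symm x⟫_ℂ := by rw [cB.symm_apply_apply]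
    _ = ⟪x, cB (T (cA.symm y))⟫_ℂ := cB.symm.inner_map_map_conj _ _

end Conjugation

namespace SympBlocks

variable {c : Hp ≃ₛₗᵢ[starRingEnd ℂ] Hm} {g : Hp →L[ℂ] Hp} {h : Hm →L[ℂ] Hp}

theorem adjoint_barP_comp_barP (hs : SympBlocks c g h) :
    (barP c g)† ∘L barP c g = 1 + h† ∘L h := by
  ext x
  have := congr(c ($(hs.1) (c.symm x)))
  simpa [barP, barM, opTrans, adjoint_opBar, sub_eq_iff_eq_add] using this

theorem barP_comp_adjoint_barP (hs : SympBlocks c g h) :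
    barP c g ∘L (barP c g)† = 1 + barM c h ∘L (barM c h)† := by
  ext x
  have := congr(c ($(hs.2.2.1) (c.symm x)))
  simpa [barP, barM, adjoint_opBar, sub_eq_iff_eq_add] using this

end SympBlocks

theorem statement11_general (c : Hp ≃ₛₗᵢ[starRingEnd ℂ] Hm) (g : Hp →L[ℂ] Hp) (h : Hm →L[ℂ] Hp)
    (hs : SympBlocks c g h)
    (Z : Hm →L[ℂ] Hp) (hZ : InDres c Z) :
    IsUnit (barM c h ∘L Z + barP c g) := by
  set G := barP c g
  set B := barM c h
  have hG : IsUnit G := ContinuousLinearMap.isUnit_of_adjoint_comp_self_eq_one_add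
    hs.adjoint_barP_comp_barP hs.barP_comp_adjoint_barP
  have hGB : ∀ x, ‖(B†) x‖ ^ 2 + ‖x‖ ^ 2 = ‖(G†) x‖ ^ 2 :=
    ContinuousLinearMap.norm_sq_add_norm_sq_eq_of_adjoint_comp_self_eq (by
      simpa only [ContinuousLinearMap.adjoint_adjoint] using hs.barP_comp_adjoint_barP)
  have hZ₁ : ‖Z†‖ ≤ 1 := by
    rw [LinearIsometryEquiv.norm_map]
    exact ContinuousLinearMap.norm_le_one_of_inner_one_sub_adjoint_comp_self_pos hZ.2.2
  have hP : ∀ x, ‖(Z† ∘L B†) x‖ ^ 2 + ‖x‖ ^ 2 ≤ ‖(G†) x‖ ^ 2 := fun x => by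
    rw [← hGB]
    gcongr
    exact ((Z†).le_opNorm _).trans (mul_le_of_le_one_left (norm_nonneg _) hZ₁)
  obtain ⟨q, hq₀, hq, hPq⟩ := (G†).exists_lt_one_forall_norm_apply_le _ hP
  rw [← isUnit_star, ContinuousLinearMap.star_eq_adjoint, map_add,
    ContinuousLinearMap.adjoint_comp, add_comm]
  exact ContinuousLinearMap.isUnit_add_of_norm_apply_le
    (by simpa only [ContinuousLinearMap.star_eq_adjoint] using hG.star) hq₀ hq hPq

/-- for `(g, h; h̄, ḡ) ∈ Sp_res(V,Ω)` and `Z` in the restricted Siegel disc,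
`h̄Z + ḡ` is invertible on `H₋`. -/
theorem statement11 (c : Hp ≃ₛₗᵢ[starRingEnd ℂ] Hm) (g : Hp →L[ℂ] Hp) (h : Hm →L[ℂ] Hp)
    (hs : SympBlocks c g h) (hHS : IsHS h)
    (Z : Hm →L[ℂ] Hp) (hZ : InDres c Z) :
    IsUnit (barM c h ∘L Z + barP c g) :=
  statement11_general c g h hs Z hZ
end
end

section
/- The isotropy group of 0 ∈ D_res(H) under the action ρ of Sp_res(V,Ω) is {(g, 0; 0, ḡ) : g ∈ U(H₊)}, isomorphic to the unitary group U(H₊). -/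
/- Setting: `H = H₊ ⊕ H₋` is a separable complex Hilbert space. We model the two summands
as complex Hilbert spaces `Hp`, `Hm` and operators on `H` by their four blocks, or work on a
single Hilbert space `H` with orthogonal projections `p₊, p₋`. The antilinear conjugation
exchanging `H₊` and `H₋` is modeled as a conjugate-linear isometric equivalence
`c : Hp ≃ₛₗᵢ[starRingEnd ℂ] Hm`. -/

noncomputable section
open ContinuousLinearMap Complex
open scoped InnerProductSpace ComplexOrder

variable {Hp Hm : Type} [NormedAddCommGroup Hp] [InnerProductSpace ℂ Hp] [CompleteSpace Hp]
  [NormedAddCommGroup Hm] [InnerProductSpace ℂ Hm] [CompleteSpace Hm]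

lemma opBar_zero {A A' B B' : Type} [NormedAddCommGroup A] [InnerProductSpace ℂ A]
    [NormedAddCommGroup A'] [InnerProductSpace ℂ A']
    [NormedAddCommGroup B] [InnerProductSpace ℂ B]
    [NormedAddCommGroup B'] [InnerProductSpace ℂ B']
    (cA : A ≃ₛₗᵢ[starRingEnd ℂ] A') (cB : B ≃ₛₗᵢ[starRingEnd ℂ] B') :
    opBar cA cB (0 : A →L[ℂ] B) = 0 := by
  ext x; simp [opBar]

lemma barP_comp (c : Hp ≃ₛₗᵢ[starRingEnd ℂ] Hm) (a b : Hp →L[ℂ] Hp) :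
    barP c (a ∘L b) = barP c a ∘L barP c b := by
  ext x; simp [barP, opBar]

lemma barP_one (c : Hp ≃ₛₗᵢ[starRingEnd ℂ] Hm) : barP c (1 : Hp →L[ℂ] Hp) = 1 := by
  ext x; simp [barP, opBar]

lemma isUnit_barP (c : Hp ≃ₛₗᵢ[starRingEnd ℂ] Hm) {g : Hp →L[ℂ] Hp} (hg : IsUnit g) :
    IsUnit (barP c g) := by
  obtain ⟨u, rfl⟩ := hg
  refine ⟨⟨barP c u.val, barP c u.inv, ?_, ?_⟩, rfl⟩
  · show barP c u.val ∘L barP c u.inv = 1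
    rw [← barP_comp, show u.val ∘L u.inv = 1 from u.val_inv, barP_one]
  · show barP c u.inv ∘L barP c u.val = 1
    rw [← barP_comp, show u.inv ∘L u.val = 1 from u.inv_val, barP_one]

lemma isUnit_of_bounds (g : Hp →L[ℂ] Hp) (hb : ∀ u, ‖u‖ ≤ ‖g u‖)
    (hb' : ∀ u, ‖u‖ ≤ ‖adjoint g u‖) : IsUnit g := by
  have hker : LinearMap.ker (g : Hp →ₗ[ℂ] Hp) = ⊥ := by
    rw [LinearMap.ker_eq_bot']
    intro x hx
    have := hb x
    rw [show g x = 0 from hx, norm_zero] at this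
    exact norm_le_zero_iff.mp this
  have hanti : AntilipschitzWith 1 g := g.antilipschitz_of_bound (by simpa using hb)
  have hclosed : IsClosed (Set.range g) := hanti.isClosed_range g.uniformContinuous
  have hcl : IsClosed ((LinearMap.range (g : Hp →ₗ[ℂ] Hp) : Submodule ℂ Hp) : Set Hp) := by
    rw [LinearMap.coe_range]; exact hclosed
  haveI : CompleteSpace (LinearMap.range (g : Hp →ₗ[ℂ] Hp)) := hcl.completeSpace_coe
  have hrange : LinearMap.range (g : Hp →ₗ[ℂ] Hp) = ⊤ := by
    rw [← Submodule.orthogonal_eq_bot_iff, Submodule.eq_bot_iff]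
    intro x hx
    have hgx : adjoint g x = 0 := by
      have h1 : ⟪adjoint g x, adjoint g x⟫_ℂ = 0 := by
        rw [adjoint_inner_left]
        exact inner_eq_zero_symm.mp ((Submodule.mem_orthogonal _ _).mp hx _ ⟨_, rfl⟩)
      exact inner_self_eq_zero.mp h1
    have := hb' x
    rw [hgx, norm_zero] at this
    exact norm_le_zero_iff.mp this
  let e := ContinuousLinearEquiv.ofBijective g hker hrange
  refine ⟨⟨g, e.symm.toContinuousLinearMap, ?_, ?_⟩, rfl⟩
  · ext x
    show g (e.symm x) = x
    exact ContinuousLinearEquiv.ofBijective_apply_symm_apply g hker hrange x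
  · ext x
    show e.symm (g x) = x
    exact ContinuousLinearEquiv.ofBijective_symm_apply_apply g hker hrange x

lemma norm_le_of_one_add (g : Hp →L[ℂ] Hp) {F : Type} [NormedAddCommGroup F]
    [InnerProductSpace ℂ F] [CompleteSpace F] (T : Hp →L[ℂ] F)
    (heq : adjoint g ∘L g = 1 + adjoint T ∘L T) : ∀ u, ‖u‖ ≤ ‖g u‖ := by
  intro u
  have e1 : (‖g u‖ : ℂ) ^ 2 = (‖u‖ : ℂ) ^ 2 + (‖T u‖ : ℂ) ^ 2 := by
    have h2 := congrArg (fun A : Hp →L[ℂ] Hp => ⟪u, A u⟫_ℂ) heq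
    simp only [ContinuousLinearMap.comp_apply, ContinuousLinearMap.add_apply,
      ContinuousLinearMap.one_apply, inner_add_right, adjoint_inner_right] at h2
    rw [inner_self_eq_norm_sq_to_K, inner_self_eq_norm_sq_to_K,
      inner_self_eq_norm_sq_to_K] at h2
    exact h2
  have e2 : ‖g u‖ ^ 2 = ‖u‖ ^ 2 + ‖T u‖ ^ 2 := by
    have := congrArg Complex.re e1
    simpa only [← Complex.ofReal_pow, Complex.add_re, Complex.ofReal_re] using this
  nlinarith [norm_nonneg (g u), norm_nonneg u, sq_nonneg ‖T u‖]

/-- the isotropy group of `0 ∈ D_res(H)` under the action `ρ` of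
`Sp_res(V,Ω)` is `{(g, 0; 0, ḡ) : g unitary on H₊}`. -/
theorem statement13 (c : Hp ≃ₛₗᵢ[starRingEnd ℂ] Hm) (g : Hp →L[ℂ] Hp) (h : Hm →L[ℂ] Hp)
    (hs : SympBlocks c g h) (hHS : IsHS h) :
    rho c g h 0 = 0 ↔
      (h = 0 ∧ (adjoint g) ∘L g = 1 ∧ g ∘L (adjoint g) = 1) := by
  have hopT : opTrans c h = adjoint (barM c h) := rfl
  have h1 : adjoint g ∘L g = 1 + adjoint (barM c h) ∘L barM c h := by
    have := hs.1; rw [hopT] at this; exact eq_add_of_sub_eq this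
  have h2 : adjoint (adjoint g) ∘L adjoint g = 1 + adjoint (adjoint h) ∘L adjoint h := by
    rw [adjoint_adjoint]
    have := hs.2.2.1
    rw [show h ∘L adjoint h = adjoint (adjoint h) ∘L adjoint h by rw [adjoint_adjoint]] at this
    exact eq_add_of_sub_eq this
  have hbg : ∀ u, ‖u‖ ≤ ‖g u‖ := norm_le_of_one_add g (barM c h) h1
  have hbg' : ∀ u, ‖u‖ ≤ ‖adjoint g u‖ := norm_le_of_one_add (adjoint g) (adjoint h) h2
  have hgu : IsUnit g := isUnit_of_bounds g hbg hbg'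
  have hbu : IsUnit (barP c g) := isUnit_barP c hgu
  have hrho : rho c g h 0 = h ∘L Ring.inverse (barP c g) := by
    simp [rho]
  constructor
  · intro h0
    rw [hrho] at h0
    have hh0 : h = 0 := by
      calc h = h ∘L (Ring.inverse (barP c g) * barP c g) := by
              rw [Ring.inverse_mul_cancel _ hbu, ContinuousLinearMap.one_def,
                ContinuousLinearMap.comp_id]
        _ = (h ∘L Ring.inverse (barP c g)) ∘L barP c g := rfl
        _ = 0 := by rw [h0]; simp
    subst hh0
    refine ⟨rfl, ?_, ?_⟩
    · have := hs.1
      rwa [show barM c (0 : Hm →L[ℂ] Hp) = 0 from opBar_zero _ _,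
        show opTrans c (0 : Hm →L[ℂ] Hp) = adjoint (barM c 0) from rfl,
        show barM c (0 : Hm →L[ℂ] Hp) = 0 from opBar_zero _ _, map_zero,
        ContinuousLinearMap.zero_comp, sub_zero] at this
    · have := hs.2.2.1
      rwa [ContinuousLinearMap.zero_comp, sub_zero] at this
  · rintro ⟨rfl, -, -⟩
    rw [hrho, ContinuousLinearMap.zero_comp]
end
end

section
/- For A, B in the restricted symplectic Lie algebra sp_res(V,Ω), with block forms A = (A₁, A₂; Ā₂, Ā₁) and B = (B₁, B₂; B̄₂, B̄₁), the Schwinger term satisfies s(A,B) = 2i·Tr(Ā₂B₂ − A₂B̄₂), and this value is real. -/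
/- Setting: `H = H₊ ⊕ H₋` is a separable complex Hilbert space. We model the two summands
as complex Hilbert spaces `Hp`, `Hm` and operators on `H` by their four blocks, or work on a
single Hilbert space `H` with orthogonal projections `p₊, p₋`. The antilinear conjugation
exchanging `H₊` and `H₋` is modeled as a conjugate-linear isometric equivalence
`c : Hp ≃ₛₗᵢ[starRingEnd ℂ] Hm`. -/

noncomputable section
open ContinuousLinearMap Complex
open scoped InnerProductSpace ComplexOrder

variable {Hp Hm : Type} [NormedAddCommGroup Hp] [InnerProductSpace ℂ Hp] [CompleteSpace Hp]
  [NormedAddCommGroup Hm] [InnerProductSpace ℂ Hm] [CompleteSpace Hm]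

section Aux

open scoped ComplexConjugate

variable {E F : Type} [NormedAddCommGroup E] [InnerProductSpace ℂ E]
  [NormedAddCommGroup F] [InnerProductSpace ℂ F]

/-- A conjugate-linear isometric equivalence conjugates the inner product. -/
lemma conj_inner_map (f : E ≃ₛₗᵢ[starRingEnd ℂ] F) (x y : E) :
    ⟪f x, f y⟫_ℂ = conj ⟪x, y⟫_ℂ := by
  have h1 : ‖f x + f y‖ = ‖x + y‖ := by rw [← map_add]; exact f.norm_map _
  have h2 : ‖f x - f y‖ = ‖x - y‖ := by rw [← map_sub]; exact f.norm_map _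
  have h3 : f x - Complex.I • f y = f (x + Complex.I • y) := by
    rw [map_add, map_smulₛₗ]
    simp [Complex.conj_I, sub_eq_add_neg]
  have h4 : f x + Complex.I • f y = f (x - Complex.I • y) := by
    rw [map_sub, map_smulₛₗ]
    simp [Complex.conj_I, sub_eq_add_neg]
  rw [inner_eq_sum_norm_sq_div_four, inner_eq_sum_norm_sq_div_four]
  simp only [RCLike.I_to_complex]
  rw [h1, h2, h3, h4, f.norm_map, f.norm_map]
  simp only [map_div₀, map_add, map_sub, map_mul, map_pow,
    Complex.conj_ofReal, RCLike.conj_ofReal, Complex.conj_I, map_ofNat]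
  ring

/-- Parseval: the squared norms of the coefficients sum to the squared norm. -/
lemma parseval_hasSum [CompleteSpace E] (b : HilbertBasis ℕ ℂ E) (x : E) :
    HasSum (fun i => ‖⟪b i, x⟫_ℂ‖ ^ 2) (‖x‖ ^ 2) := by
  have h := (b.hasSum_inner_mul_inner x x).mapL Complex.reCLM
  have e1 : ∀ i, Complex.reCLM (⟪x, b i⟫_ℂ * ⟪b i, x⟫_ℂ) = ‖⟪b i, x⟫_ℂ‖ ^ 2 := by
    intro i
    rw [← inner_conj_symm (b i) x, Complex.reCLM_apply, Complex.mul_conj]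
    simp only [Complex.normSq_eq_norm_sq, RCLike.norm_conj]
    exact Complex.ofReal_re _
  have e2 : Complex.reCLM ⟪x, x⟫_ℂ = ‖x‖ ^ 2 := by
    simpa using inner_self_eq_norm_sq (𝕜 := ℂ) x
  rw [← e2]
  exact (funext e1 : _) ▸ h

end Aux


section Aux2

/-- The image of a Hilbert basis under the antilinear conjugation is a Hilbert basis. -/
def conjBasis (c : Hp ≃ₛₗᵢ[starRingEnd ℂ] Hm) (bp : HilbertBasis ℕ ℂ Hp) :
    HilbertBasis ℕ ℂ Hm :=
  HilbertBasis.mk (v := fun i => c (bp i))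
    (by
      have hbp := bp.orthonormal
      rw [orthonormal_iff_ite] at hbp ⊢
      intro i j
      rw [conj_inner_map, hbp i j]
      split <;> simp)
    (by
      intro x _
      have hx : c.symm x ∈ closure ((Submodule.span ℂ (Set.range ⇑bp)) : Set Hp) := by
        rw [← Submodule.topologicalClosure_coe, bp.dense_span]
        trivial
      have hmap : Set.MapsTo c (Submodule.span ℂ (Set.range ⇑bp))
          (Submodule.span ℂ (Set.range fun i => c (bp i))) := by
        intro y hy
        induction hy using Submodule.span_induction with
        | mem z hz => obtain ⟨i, rfl⟩ := hz; exact Submodule.subset_span ⟨i, rfl⟩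
        | zero => simpa using Submodule.zero_mem _
        | add a b _ _ ha hb => rw [map_add]; exact Submodule.add_mem _ ha hb
        | smul a z _ hz => rw [map_smulₛₗ]; exact Submodule.smul_mem _ _ hz
      have hmem : x ∈ closure ((Submodule.span ℂ
          (Set.range fun i => c (bp i))) : Set Hm) := by
        have h2 : c (c.symm x) ∈ ⇑c '' closure ((Submodule.span ℂ (Set.range ⇑bp)) : Set Hp) :=
          ⟨_, hx, rfl⟩
        have h3 := image_closure_subset_closure_image c.continuous h2
        have h4 := closure_mono hmap.image_subset h3
        simpa using h4
      rw [← Submodule.topologicalClosure_coe] at hmem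
      exact hmem)

lemma conjBasis_coe (c : Hp ≃ₛₗᵢ[starRingEnd ℂ] Hm) (bp : HilbertBasis ℕ ℂ Hp) :
    ⇑(conjBasis c bp) = fun i => c (bp i) :=
  HilbertBasis.coe_mk _ _

lemma summable_inner_comp (A2 B2 : Hm →L[ℂ] Hp) (hA : IsHS A2) (hB : IsHS B2)
    (v : HilbertBasis ℕ ℂ Hm) :
    Summable fun i => ⟪A2 (v i), B2 (v i)⟫_ℂ := by
  apply Summable.of_norm
  apply Summable.of_nonneg_of_le (fun i => norm_nonneg _) _ (((hA v).add (hB v)).div_const 2)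
  intro i
  calc ‖⟪A2 (v i), B2 (v i)⟫_ℂ‖ ≤ ‖A2 (v i)‖ * ‖B2 (v i)‖ := norm_inner_le_norm _ _
    _ ≤ (‖A2 (v i)‖ ^ 2 + ‖B2 (v i)‖ ^ 2) / 2 := by
        nlinarith [sq_nonneg (‖A2 (v i)‖ - ‖B2 (v i)‖)]

lemma hs_prod_summable (T : Hm →L[ℂ] Hp) (hT : IsHS T) (v : HilbertBasis ℕ ℂ Hm)
    (bp : HilbertBasis ℕ ℂ Hp) :
    Summable fun p : ℕ × ℕ => ‖⟪bp p.2, T (v p.1)⟫_ℂ‖ ^ 2 := by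
  rw [summable_prod_of_nonneg (fun p => sq_nonneg _)]
  exact ⟨fun i => (parseval_hasSum bp (T (v i))).summable,
    (hT v).congr fun i => ((parseval_hasSum bp (T (v i))).tsum_eq).symm⟩

/-- Basis independence of the trace of `A₂*B₂`. -/
lemma trace_indep (A2 B2 : Hm →L[ℂ] Hp) (hA : IsHS A2) (hB : IsHS B2)
    (bp : HilbertBasis ℕ ℂ Hp) (v : HilbertBasis ℕ ℂ Hm) :
    ∑' i, ⟪A2 (v i), B2 (v i)⟫_ℂ
      = ∑' j, ⟪adjoint B2 (bp j), adjoint A2 (bp j)⟫_ℂ := by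
  set f : ℕ → ℕ → ℂ := fun i j => ⟪A2 (v i), bp j⟫_ℂ * ⟪bp j, B2 (v i)⟫_ℂ with hf
  have hfib1 : ∀ i, HasSum (fun j => f i j) ⟪A2 (v i), B2 (v i)⟫_ℂ := fun i =>
    bp.hasSum_inner_mul_inner _ _
  have hfib2 : ∀ j, HasSum (fun i => f i j)
      ⟪adjoint B2 (bp j), adjoint A2 (bp j)⟫_ℂ := by
    intro j
    have h := v.hasSum_inner_mul_inner (adjoint B2 (bp j)) (adjoint A2 (bp j))
    have heq : (fun i => ⟪adjoint B2 (bp j), v i⟫_ℂ * ⟪v i, adjoint A2 (bp j)⟫_ℂ)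
        = fun i => f i j := by
      funext i
      rw [hf, ContinuousLinearMap.adjoint_inner_left, ContinuousLinearMap.adjoint_inner_right]
      ring
    rwa [heq] at h
  have hnorm : Summable fun p : ℕ × ℕ => ‖Function.uncurry f p‖ := by
    apply Summable.of_nonneg_of_le (fun p => norm_nonneg _) _
      (((hs_prod_summable A2 hA v bp).add (hs_prod_summable B2 hB v bp)).div_const 2)
    rintro ⟨i, j⟩
    have h1 : ‖Function.uncurry f (i, j)‖
        = ‖⟪bp j, A2 (v i)⟫_ℂ‖ * ‖⟪bp j, B2 (v i)⟫_ℂ‖ := by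
      rw [Function.uncurry, hf]
      rw [norm_mul, norm_inner_symm (A2 (v i)) (bp j)]
    rw [h1]
    nlinarith [sq_nonneg (‖⟪bp j, A2 (v i)⟫_ℂ‖ - ‖⟪bp j, B2 (v i)⟫_ℂ‖),
      norm_nonneg (⟪bp j, A2 (v i)⟫_ℂ), norm_nonneg (⟪bp j, B2 (v i)⟫_ℂ)]
  have hsum : Summable (Function.uncurry f) := hnorm.of_norm
  calc ∑' i, ⟪A2 (v i), B2 (v i)⟫_ℂ = ∑' (i) (j), f i j :=
        tsum_congr fun i => ((hfib1 i).tsum_eq).symm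
    _ = ∑' (j) (i), f i j := (Summable.tsum_comm hsum).symm
    _ = ∑' j, ⟪adjoint B2 (bp j), adjoint A2 (bp j)⟫_ℂ :=
        tsum_congr fun j => (hfib2 j).tsum_eq

end Aux2

/-- for `A, B ∈ sp_res(V,Ω)` in block form, the Schwinger term
`s(A,B) = 2i·Tr(Ā₂B₂ − A₂B̄₂)` is well defined (the traces converge) and is real. -/
theorem statement18 (c : Hp ≃ₛₗᵢ[starRingEnd ℂ] Hm)
    (bp : HilbertBasis ℕ ℂ Hp) (bm : HilbertBasis ℕ ℂ Hm)
    (A1 B1 : Hp →L[ℂ] Hp) (A2 B2 : Hm →L[ℂ] Hp)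
    (hA1 : adjoint A1 = -A1) (hB1 : adjoint B1 = -B1)
    (hA2T : opTrans c A2 = A2) (hB2T : opTrans c B2 = B2)
    (hA2 : IsHS A2) (hB2 : IsHS B2) :
    -- the traces Tr(Ā₂B₂) (on H₋) and Tr(A₂B̄₂) (on H₊) converge
    (Summable fun i => ⟪bm i, ((barM c A2) ∘L B2) (bm i)⟫_ℂ) ∧
    (Summable fun i => ⟪bp i, (A2 ∘L (barM c B2)) (bp i)⟫_ℂ) ∧
    -- s(A,B) = 2i·Tr(Ā₂B₂ − A₂B̄₂) is real
    (2 * Complex.I * ((∑' i, ⟪bm i, ((barM c A2) ∘L B2) (bm i)⟫_ℂ)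
        - ∑' i, ⟪bp i, (A2 ∘L (barM c B2)) (bp i)⟫_ℂ)).im = 0 := by
  classical
  have hA2T' : adjoint (barM c A2) = A2 := hA2T
  have hB2T' : adjoint (barM c B2) = B2 := hB2T
  have hbarA : barM c A2 = adjoint A2 := by
    conv_rhs => rw [← hA2T', adjoint_adjoint]
  set e := conjBasis c bp with he0
  have he : ⇑e = fun i => c (bp i) := conjBasis_coe c bp
  have hb : ∀ (T : Hm →L[ℂ] Hp) (x : Hp), (barM c T) x = c (T (c x)) := by
    intro T x
    simp [barM, opBar]
  have t1 : ∀ i, ⟪bm i, ((barM c A2) ∘L B2) (bm i)⟫_ℂ = ⟪A2 (bm i), B2 (bm i)⟫_ℂ := by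
    intro i
    rw [ContinuousLinearMap.comp_apply, hbarA, ContinuousLinearMap.adjoint_inner_right]
  have t2 : ∀ i, ⟪bp i, (A2 ∘L (barM c B2)) (bp i)⟫_ℂ
      = starRingEnd ℂ ⟪A2 (e i), B2 (e i)⟫_ℂ := by
    intro i
    have hei : e i = c (bp i) := congrFun he i
    have h1 : ⟪bp i, (A2 ∘L (barM c B2)) (bp i)⟫_ℂ
        = ⟪(barM c A2) (bp i), (barM c B2) (bp i)⟫_ℂ := by
      conv_lhs => rw [ContinuousLinearMap.comp_apply, ← hA2T',
        ContinuousLinearMap.adjoint_inner_right]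
    rw [h1, hb, hb, conj_inner_map, hei]
  have hsum1 : Summable fun i => ⟪A2 (bm i), B2 (bm i)⟫_ℂ :=
    summable_inner_comp A2 B2 hA2 hB2 bm
  have hsumE : Summable fun i => ⟪A2 (e i), B2 (e i)⟫_ℂ :=
    summable_inner_comp A2 B2 hA2 hB2 e
  refine ⟨hsum1.congr fun i => (t1 i).symm,
    (hsumE.map (starRingEnd ℂ) RCLike.continuous_conj).congr fun i => (t2 i).symm, ?_⟩
  rw [tsum_congr t1, tsum_congr t2]
  have hconj : ∑' i, starRingEnd ℂ ⟪A2 (e i), B2 (e i)⟫_ℂ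
      = starRingEnd ℂ (∑' i, ⟪A2 (e i), B2 (e i)⟫_ℂ) :=
    ((hsumE.hasSum).map (starRingEnd ℂ) RCLike.continuous_conj).tsum_eq
  rw [hconj, trace_indep A2 B2 hA2 hB2 bp bm, trace_indep A2 B2 hA2 hB2 bp e]
  simp [Complex.mul_im, Complex.mul_re, Complex.sub_re, Complex.sub_im,
    Complex.conj_re, Complex.conj_im]
end
end
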